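/- arXiv:2410.22303 — 2 statements merged into one kernel-verified Lean document; each statement's English description precedes it below -/
import Mathlib

section
/- Fix integers n ≥ 1, a statistical parameter κ_s ≥ 0, and let Δ = 2^{κ_s}·n. Suppose x₁,...,xₙ are nonnegative integers, r₁,...,rₙ ∈ {0,...,2^{κ_s}−1}, and e' is an integer with 0 ≤ e' ≤ n−1. Let X̄ = Δ·Σᵢ xᵢ + Σᵢ rᵢ + n − e'. Then ⌈X̄/Δ⌉ = Σᵢ xᵢ + 1. -/
/-! The blinding bound `rᵢ < 2^κs` and `e' < n` put the offset `t = Σ rᵢ + n − e'` in `(0, Δ]`,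
so `X̄ / Δ = Σ xᵢ + t / Δ` with `t / Δ ∈ (0, 1]`, whose ceiling is `Σ xᵢ + 1`. -/

open Finset

theorem Int.ceil_intCast_mul_add_div_eq {K : Type*} [Field K] [LinearOrder K]
    [IsStrictOrderedRing K] [FloorRing K] {Δ S t : ℤ} (ht : 0 < t) (htΔ : t ≤ Δ) :
    ⌈((Δ * S + t : ℤ) : K) / Δ⌉ = S + 1 := by
  have hΔ : (0 : K) < Δ := by exact_mod_cast ht.trans_le htΔ
  have hfrac : ⌈(t : K) / Δ⌉ = 1 := by
    rw [Int.ceil_eq_iff]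
    constructor
    · rw [Int.cast_one, sub_self]
      exact div_pos (by exact_mod_cast ht) hΔ
    · rw [Int.cast_one, div_le_one hΔ]
      exact_mod_cast htΔ
  rw [Int.cast_add, Int.cast_mul, add_div, mul_div_cancel_left₀ _ hΔ.ne', Int.ceil_intCast_add,
    hfrac]

theorem Finset.sum_add_card_le_mul {ι : Type*} [Fintype ι] {r : ι → ℕ} {B : ℕ}
    (hr : ∀ i, r i < B) : ∑ i, r i + Fintype.card ι ≤ B * Fintype.card ι := by
  calc ∑ i, r i + Fintype.card ι = ∑ i, (r i + 1) := by simp [sum_add_distrib]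
    _ ≤ ∑ _i : ι, B := sum_le_sum fun i _ => hr i
    _ = B * Fintype.card ι := by simp [mul_comm]

/-- Correctness of the OPA_LWR decoder: with `Δ = 2^κs * n`, blinding terms
`rᵢ < 2^κs`, and error `e' ≤ n - 1`, we have `⌈X̄/Δ⌉ = Σ xᵢ + 1` where
`X̄ = Δ·Σ xᵢ + Σ rᵢ + n − e'`. -/
theorem opa_lwr_decode_correct (n κs : ℕ) (hn : 1 ≤ n) (x r : Fin n → ℕ)
    (hr : ∀ i, r i < 2 ^ κs) (e' : ℕ) (he' : e' ≤ n - 1) :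
    ⌈((((2 ^ κs * n : ℕ) : ℤ) * (∑ i, (x i : ℤ)) + (∑ i, (r i : ℤ))
        + (n : ℤ) - (e' : ℤ) : ℤ) : ℚ) / ((2 ^ κs * n : ℕ) : ℚ)⌉
      = (∑ i, (x i : ℤ)) + 1 := by
  have hblind : ∑ i, r i + n ≤ 2 ^ κs * n := by
    simpa using sum_add_card_le_mul hr
  have hpos : 0 < ∑ i, (r i : ℤ) + n - e' := by
    have : 0 ≤ ∑ i, (r i : ℤ) := sum_nonneg fun i _ => Int.natCast_nonneg _
    omega
  have hle : ∑ i, (r i : ℤ) + n - e' ≤ ((2 ^ κs * n : ℕ) : ℤ) := by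
    have : ∑ i, (r i : ℤ) + n ≤ ((2 ^ κs * n : ℕ) : ℤ) := by exact_mod_cast hblind
    omega
  convert Int.ceil_intCast_mul_add_div_eq (K := ℚ) (S := ∑ i, (x i : ℤ)) hpos hle using 3
  · congr 1; ring
  · exact (Int.cast_natCast _).symm
end

section
/- (Shamir reconstruction over the integers with offset.) Let m ≥ 1, Δ = m!, and let f(X) = Δ·s + Σ_{i=1}^{r−1} rᵢ·Xⁱ ∈ ℤ[X] be a polynomial of degree at most r−1 with f(0) = Δ·s. For any set S ⊆ {1,...,m} with |S| = r, let Λᵢ = Δ·∏_{j∈S, j≠i} j/(j−i) for i ∈ S. Then Σ_{i∈S} Λᵢ·f(i) = Δ²·s. -/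
open Nat Polynomial

/-! Over `ℚ`, `f` agrees with its Lagrange interpolant on the `r` distinct nodes of `S`, since its
degree is below `r`. Evaluating the interpolant at `0` gives `f(0) = Σ_{i∈S} λᵢ f(i)` with
`λᵢ = ∏_{j≠i} j/(j−i)`, and multiplying by `Δ` and using `f(0) = Δ s` yields `Δ² s`. -/

namespace Lagrange

variable {F ι : Type*} [Field F] [DecidableEq ι] {s : Finset ι} {v : ι → F}

theorem eval_zero_basis (i : ι) :
    (Lagrange.basis s v i).eval 0 = ∏ j ∈ s.erase i, v j / (v j - v i) := by
  rw [Lagrange.basis, eval_prod]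
  refine Finset.prod_congr rfl fun j _ => ?_
  rw [basisDivisor, eval_mul, eval_C, eval_sub, eval_X, eval_C, zero_sub, ← neg_sub, inv_neg,
    neg_mul_neg, div_eq_inv_mul]

theorem eval_zero_eq_sum_mul_eval_nodes (hvs : Set.InjOn v s) {p : F[X]}
    (hp : p.degree < s.card) :
    p.eval 0 = ∑ i ∈ s, (∏ j ∈ s.erase i, v j / (v j - v i)) * p.eval (v i) := by
  conv_lhs => rw [eq_interpolate hvs hp]
  simp only [interpolate_apply, eval_finsetSum, eval_mul, eval_C, eval_zero_basis, mul_comm]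

end Lagrange

theorem integer_shamir_reconstruct_general (m r : ℕ) (hr : 1 ≤ r) (s : ℤ)
    (f : Polynomial ℤ) (hdeg : f.natDegree ≤ r - 1)
    (hf0 : f.coeff 0 = (m ! : ℤ) * s)
    (S : Finset ℕ) (hcard : S.card = r) :
    ∑ i ∈ S, ((m ! : ℚ) * ∏ j ∈ S.erase i, (j : ℚ) / ((j : ℚ) - (i : ℚ)))
        * ((f.eval (i : ℤ) : ℤ) : ℚ)
      = ((m ! : ℚ)) ^ 2 * (s : ℚ) := by
  set g : ℚ[X] := f.map (Int.castRingHom ℚ)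
  have hg_eval (i : ℕ) : g.eval (i : ℚ) = ((f.eval (i : ℤ) : ℤ) : ℚ) := by
    simp [g, eval_map, eval₂_at_natCast]
  have hg0 : g.eval 0 = (m ! : ℚ) * s := by
    simp [← coeff_zero_eq_eval_zero, g, hf0]
  have hg_deg : g.degree < S.card := by
    rw [hcard]
    calc g.degree ≤ f.natDegree := degree_map_le.trans degree_le_natDegree
      _ < r := by exact_mod_cast hdeg.trans_lt (Nat.sub_lt hr Nat.one_pos)
  have hinj : Set.InjOn (fun n : ℕ => (n : ℚ)) S := Nat.cast_injective.injOn
  rw [pow_two, mul_assoc, ← hg0, Lagrange.eval_zero_eq_sum_mul_eval_nodes hinj hg_deg,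
    Finset.mul_sum]
  simp only [hg_eval, mul_assoc]

/-- Shamir reconstruction over the integers with offset `Δ = m!`:
if `f ∈ ℤ[X]` has degree ≤ r−1 and constant coefficient `Δ·s`, then for any
`S ⊆ {1,…,m}` of size `r`, `Σ_{i∈S} Λᵢ·f(i) = Δ²·s` where
`Λᵢ = Δ·∏_{j∈S, j≠i} j/(j−i)`. -/
theorem integer_shamir_reconstruct (m r : ℕ) (hm : 1 ≤ m) (hr : 1 ≤ r) (s : ℤ)
    (f : Polynomial ℤ) (hdeg : f.natDegree ≤ r - 1)
    (hf0 : f.coeff 0 = (m ! : ℤ) * s)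
    (S : Finset ℕ) (hS : S ⊆ Finset.Icc 1 m) (hcard : S.card = r) :
    ∑ i ∈ S, ((m ! : ℚ) * ∏ j ∈ S.erase i, (j : ℚ) / ((j : ℚ) - (i : ℚ)))
        * ((f.eval (i : ℤ) : ℤ) : ℚ)
      = ((m ! : ℚ)) ^ 2 * (s : ℚ) :=
  integer_shamir_reconstruct_general m r hr s f hdeg hf0 S hcard
end
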